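/- arXiv:0704.2813 — 5 statements merged into one kernel-verified Lean document; each statement's English description precedes it below -/
import Mathlib

section
/- For all natural numbers u, l, d and all n ≥ 2, the (u,l,d)-Motzkin numbers satisfy the recursion relation (n+2)·m_n^{(u,l,d)} = l·(2n+1)·m_{n-1}^{(u,l,d)} + (4ud − l²)·(n−1)·m_{n-2}^{(u,l,d)} (as an identity of integers, where 4ud − l² may be negative). -/
open PowerSeries Finset

/-- The weight (number of color choices) of a single step of vertical displacement `z`:
up-steps `(1,j)` have weight `u j`, the level-step `(1,0)` has weight `l`, and
down-steps `(1,-j)` have weight `d j`. -/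
def stepWeight (u : ℕ → ℕ) (l : ℕ) (d : ℕ → ℕ) (z : ℤ) : ℕ :=
  if 0 < z then u z.toNat else if z < 0 then d (-z).toNat else l

/-- `motzkinCount r u l d s t n` is the weighted number `|𝒜_{s,t}(n)|` of lattice paths of
length `n` using admissible steps `(1,z)` with `z ∈ {-r, …, r}` (step `i` is encoded by
`f i : Fin (2*r+1)` via `z = (f i : ℤ) - r`), starting at height `s`, ending at height `t`,
and never going below the x-axis; each path is counted with weight the product of the
weights of its steps (i.e. the number of its colorings). -/
def motzkinCount (r : ℕ) (u : ℕ → ℕ) (l : ℕ) (d : ℕ → ℕ) (s t : ℕ) (n : ℕ) : ℕ :=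
  ∑ f : Fin n → Fin (2 * r + 1),
    if (∀ k : Fin (n + 1),
          0 ≤ (s : ℤ) + ∑ i : Fin n, if (i : ℕ) < (k : ℕ) then ((f i : ℤ) - r) else 0) ∧
        (s : ℤ) + (∑ i : Fin n, ((f i : ℤ) - r)) = t
    then ∏ i : Fin n, stepWeight u l d ((f i : ℤ) - r)
    else 0

/-- The generating function `A_{s,t}(x) = Σ_{n≥0} |𝒜_{s,t}(n)| xⁿ ∈ ℚ⟦x⟧`. -/
noncomputable def motzkinGF (r : ℕ) (u : ℕ → ℕ) (l : ℕ) (d : ℕ → ℕ) (s t : ℕ) :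
    PowerSeries ℚ :=
  PowerSeries.mk fun n => (motzkinCount r u l d s t n : ℚ)

/-!
Removing the first step of a path expresses the weighted number `M(s, n)` of paths of length `n`
from height `s` down to `0` through `M(s - 1, n - 1)`, `M(s, n - 1)` and `M(s + 1, n - 1)`.
The explicit sum `∑ₐ uᵃ d^(a+s) l^(n-2a-s) B(n, a, s)` obeys the same recursion, because the
reflection-principle count `B` is a difference of trinomial coefficients and these satisfy
Pascal's rule; hence the two agree. At height `0`, `a! (a+1)! B(n, a, 0)` is the falling
factorial `n (n-1) ⋯ (n-2a+1)`, and the recursion in `n` then holds term by term in `a`.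
-/

namespace Motzkin

open Nat

theorem motzkinCount_zero (r : ℕ) (u : ℕ → ℕ) (l : ℕ) (d : ℕ → ℕ) (s t : ℕ) :
    motzkinCount r u l d s t 0 = if s = t then 1 else 0 := by
  simp [motzkinCount]

theorem admissible_cons_iff {α : Type*} {n : ℕ} (z : α → ℤ) (x : α) (g : Fin n → α) (s : ℕ)
    (t : ℤ) :
    ((∀ k : Fin (n + 2), 0 ≤ (s : ℤ) + ∑ i : Fin (n + 1),
        if (i : ℕ) < (k : ℕ) then z ((Fin.cons x g : Fin (n + 1) → α) i) else 0) ∧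
      s + ∑ i : Fin (n + 1), z ((Fin.cons x g : Fin (n + 1) → α) i) = t) ↔
    0 ≤ s + z x ∧ ((∀ k : Fin (n + 1), 0 ≤ s + z x + ∑ i : Fin n,
        if (i : ℕ) < (k : ℕ) then z (g i) else 0) ∧
      s + z x + ∑ i : Fin n, z (g i) = t) := by
  simp only [Fin.forall_fin_succ, Fin.sum_univ_succ, Fin.val_zero, Fin.val_succ, Fin.cons_zero,
    Fin.cons_succ, Nat.lt_irrefl, Nat.not_lt_zero, Nat.zero_lt_succ, Nat.succ_lt_succ_iff,
    if_true, if_false, Finset.sum_const_zero, add_zero, add_assoc]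
  simp [and_assoc]

theorem motzkinCount_succ (r : ℕ) (u : ℕ → ℕ) (l : ℕ) (d : ℕ → ℕ) (s t n : ℕ) :
    motzkinCount r u l d s t (n + 1) =
      ∑ x : Fin (2 * r + 1), if 0 ≤ (s : ℤ) + ((x : ℤ) - r) then
        stepWeight u l d ((x : ℤ) - r) *
          motzkinCount r u l d ((s : ℤ) + ((x : ℤ) - r)).toNat t n
      else 0 := by
  rw [motzkinCount, ← (Fin.consEquiv fun _ => Fin (2 * r + 1)).sum_comp, Fintype.sum_prod_type]
  refine Finset.sum_congr rfl fun x _ => ?_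
  simp only [Fin.consEquiv_apply, admissible_cons_iff (fun y : Fin (2 * r + 1) => (y : ℤ) - r),
    Fin.prod_univ_succ, Fin.cons_zero, Fin.cons_succ]
  split_ifs with hx
  · rw [motzkinCount, Finset.mul_sum, Int.toNat_of_nonneg hx]
    exact Finset.sum_congr rfl fun g _ => by simp only [mul_ite, mul_zero, hx, true_and]
  · exact Finset.sum_eq_zero fun g _ => if_neg fun h => hx h.1

theorem motzkinCount_one_succ (u : ℕ → ℕ) (l : ℕ) (d : ℕ → ℕ) (s t n : ℕ) :
    motzkinCount 1 u l d s t (n + 1) =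
      (if s = 0 then 0 else d 1 * motzkinCount 1 u l d (s - 1) t n) +
        l * motzkinCount 1 u l d s t n + u 1 * motzkinCount 1 u l d (s + 1) t n := by
  rw [motzkinCount_succ, Fin.sum_univ_three]
  rcases s with _ | s
  · simp [stepWeight]
  · have h : ((s : ℤ) + 1 + 1).toNat = s + 1 + 1 := by omega
    simp [stepWeight, h, add_nonneg]

def intChoose (n : ℕ) (k : ℤ) : ℕ :=
  if 0 ≤ k then n.choose k.toNat else 0

theorem intChoose_of_neg {n : ℕ} {k : ℤ} (hk : k < 0) : intChoose n k = 0 :=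
  if_neg (not_le.mpr hk)

@[simp]
theorem intChoose_natCast (n k : ℕ) : intChoose n k = n.choose k := by
  simp [intChoose]

theorem intChoose_succ (n : ℕ) (k : ℤ) :
    intChoose (n + 1) k = intChoose n (k - 1) + intChoose n k := by
  rcases lt_or_ge k 0 with hk | hk
  · simp [intChoose_of_neg, hk, show k - 1 < 0 by omega]
  lift k to ℕ using hk
  rcases k with _ | k
  · simp [intChoose]
  · rw [Nat.cast_succ, add_sub_cancel_right, ← Nat.cast_succ, intChoose_natCast,
      intChoose_natCast, intChoose_natCast, choose_succ_succ']

def trinomial (n : ℕ) (p q : ℤ) : ℕ :=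
  intChoose n p * intChoose (n - p.toNat) q

theorem trinomial_of_neg_left {n : ℕ} {p : ℤ} (q : ℤ) (hp : p < 0) : trinomial n p q = 0 := by
  simp [trinomial, intChoose_of_neg hp]

theorem trinomial_of_neg_right {n : ℕ} (p : ℤ) {q : ℤ} (hq : q < 0) : trinomial n p q = 0 := by
  simp [trinomial, intChoose_of_neg hq]

theorem trinomial_natCast_mul_factorial (n p q : ℕ) :
    trinomial n p q * (p ! * q !) = n.descFactorial (p + q) := by
  rw [trinomial, intChoose_natCast, Int.toNat_natCast, intChoose_natCast,
    ← descFactorial_mul_descFactorial (Nat.le_add_right p q), Nat.add_sub_cancel_left,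
    descFactorial_eq_factorial_mul_choose, descFactorial_eq_factorial_mul_choose]
  ring

theorem trinomial_eq_zero_of_lt {n : ℕ} {p q : ℤ} (h : (n : ℤ) < p + q) : trinomial n p q = 0 := by
  rcases lt_or_ge p 0 with hp | hp
  · exact trinomial_of_neg_left q hp
  rcases lt_or_ge q 0 with hq | hq
  · exact trinomial_of_neg_right p hq
  lift p to ℕ using hp
  lift q to ℕ using hq
  have hD := trinomial_natCast_mul_factorial n p q
  rw [descFactorial_of_lt (by omega)] at hD
  simpa [factorial_ne_zero] using hD

theorem trinomial_comm (n : ℕ) (p q : ℤ) : trinomial n p q = trinomial n q p := by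
  rcases lt_or_ge p 0 with hp | hp
  · rw [trinomial_of_neg_left q hp, trinomial_of_neg_right q hp]
  rcases lt_or_ge q 0 with hq | hq
  · rw [trinomial_of_neg_right p hq, trinomial_of_neg_left p hq]
  lift p to ℕ using hp
  lift q to ℕ using hq
  apply Nat.eq_of_mul_eq_mul_right (Nat.mul_pos (factorial_pos p) (factorial_pos q))
  rw [trinomial_natCast_mul_factorial, Nat.mul_comm p !, trinomial_natCast_mul_factorial,
    Nat.add_comm]

theorem trinomial_succ (n : ℕ) (p q : ℤ) :
    trinomial (n + 1) p q = trinomial n (p - 1) q + trinomial n p (q - 1) + trinomial n p q := by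
  rcases lt_or_ge p 0 with hp | hp
  · simp [trinomial_of_neg_left, hp, show p - 1 < 0 by omega]
  lift p to ℕ using hp
  have hleft : intChoose n (p - 1) * intChoose (n + 1 - p) q = trinomial n (p - 1) q := by
    rcases p with _ | p
    · simp [trinomial_of_neg_left, intChoose_of_neg]
    · simp [trinomial, Nat.add_sub_add_right]
  have hright : intChoose n p * intChoose (n + 1 - p) q =
      trinomial n p (q - 1) + trinomial n p q := by
    rcases le_or_gt p n with hpn | hpn
    · rw [Nat.sub_add_comm hpn, intChoose_succ]
      simp [trinomial, Nat.mul_add]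
    · simp [trinomial, Nat.choose_eq_zero_of_lt hpn]
  rw [trinomial, Int.toNat_natCast, intChoose_succ, Nat.add_mul, hleft, hright, Nat.add_assoc]

-- Reflection principle: the number of paths of length `n` from height `s` to `0` with `a`
-- up-steps that never go below the axis.
def ballot (n : ℕ) (a s : ℤ) : ℤ :=
  trinomial n a (a + s) - trinomial n (a - 1) (a + s + 1)

theorem ballot_of_neg {n : ℕ} {a : ℤ} (s : ℤ) (ha : a < 0) : ballot n a s = 0 := by
  simp [ballot, trinomial_of_neg_left, ha, show a - 1 < 0 by omega]

theorem ballot_eq_zero_of_lt {n : ℕ} {a s : ℤ} (h : (n : ℤ) < 2 * a + s) : ballot n a s = 0 := by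
  rw [ballot, trinomial_eq_zero_of_lt (by omega), trinomial_eq_zero_of_lt (by omega), sub_self]

theorem ballot_neg_one (n : ℕ) (a : ℤ) : ballot n a (-1) = 0 := by
  rw [ballot, trinomial_comm, sub_eq_zero]
  ring_nf

theorem ballot_succ (n : ℕ) (a s : ℤ) :
    ballot (n + 1) a s = ballot n (a - 1) (s + 1) + ballot n a s + ballot n a (s - 1) := by
  simp only [ballot, trinomial_succ]
  rw [show a - 1 + (s + 1) = a + s by ring, show a + (s - 1) = a + s - 1 by ring,
    show a + s + 1 - 1 = a + s by ring, show a + s - 1 + 1 = a + s by ring]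
  push_cast
  ring

theorem ballot_zero_mul_factorial (n a : ℕ) :
    ballot n a 0 * (a ! * (a + 1)! : ℕ) = n.descFactorial (2 * a) := by
  rcases a with _ | a
  · simp [ballot, trinomial, intChoose]
  have hup := trinomial_natCast_mul_factorial n (a + 1) (a + 1)
  have hdown := trinomial_natCast_mul_factorial n a (a + 2)
  have hidx : ballot n (a + 1 : ℕ) 0 =
      trinomial n (a + 1 : ℕ) (a + 1 : ℕ) - trinomial n (a : ℕ) (a + 2 : ℕ) := by
    simp only [ballot]
    push_cast
    ring_nf
  rw [show a + (a + 2) = 2 * (a + 1) by ring] at hdown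
  rw [show a + 1 + (a + 1) = 2 * (a + 1) by ring] at hup
  rw [hidx]
  zify at hup hdown
  simp only [factorial_succ] at *
  push_cast at *
  linear_combination ((a : ℤ) + 2) * hup - ((a : ℤ) + 1) * hdown

def ballotSum (u l d s n : ℕ) : ℤ :=
  ∑ a ∈ range (n + 1), (u : ℤ) ^ a * (d : ℤ) ^ (a + s) * (l : ℤ) ^ (n - (2 * a + s)) * ballot n a s

theorem sum_range_mul_ballot {n N : ℕ} (s : ℕ) (g : ℕ → ℤ) (hN : n + 1 ≤ N) :
    ∑ a ∈ range N, g a * ballot n a s = ∑ a ∈ range (n + 1), g a * ballot n a s := by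
  refine (Finset.sum_subset (range_subset_range.mpr hN) fun a _ ha => ?_).symm
  rw [ballot_eq_zero_of_lt (by simp at ha; omega), mul_zero]

theorem ballotSum_succ (u l d s n : ℕ) :
    ballotSum u l d s (n + 1) = (if s = 0 then 0 else d * ballotSum u l d (s - 1) n) +
      l * ballotSum u l d s n + u * ballotSum u l d (s + 1) n := by
  simp only [ballotSum, ballot_succ, mul_add, sum_add_distrib, mul_sum]
  have hup : ∑ a ∈ range (n + 1 + 1), (u : ℤ) ^ a * (d : ℤ) ^ (a + s) *
        (l : ℤ) ^ (n + 1 - (2 * a + s)) * ballot n (a - 1) (s + 1) =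
      ∑ a ∈ range (n + 1), (u : ℤ) * ((u : ℤ) ^ a * (d : ℤ) ^ (a + (s + 1)) *
        (l : ℤ) ^ (n - (2 * a + (s + 1))) * ballot n a (s + 1 : ℕ)) := by
    rw [sum_range_succ', Nat.cast_zero, ballot_of_neg _ (by omega), mul_zero, add_zero]
    refine sum_congr rfl fun a _ => ?_
    rw [show a + 1 + s = a + (s + 1) by omega, show n + 1 - (2 * (a + 1) + s) =
      n - (2 * a + (s + 1)) by omega]
    push_cast
    ring_nf
  have hlevel : ∑ a ∈ range (n + 1 + 1), (u : ℤ) ^ a * (d : ℤ) ^ (a + s) *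
        (l : ℤ) ^ (n + 1 - (2 * a + s)) * ballot n a s =
      ∑ a ∈ range (n + 1), (l : ℤ) * ((u : ℤ) ^ a * (d : ℤ) ^ (a + s) *
        (l : ℤ) ^ (n - (2 * a + s)) * ballot n a s) := by
    rw [sum_range_mul_ballot s _ (by omega)]
    refine sum_congr rfl fun a _ => ?_
    rcases le_or_gt (2 * a + s) n with h | h
    · rw [show n + 1 - (2 * a + s) = n - (2 * a + s) + 1 by omega, pow_succ]
      ring
    · rw [ballot_eq_zero_of_lt (by omega)]
      ring
  have hdown : ∑ a ∈ range (n + 1 + 1), (u : ℤ) ^ a * (d : ℤ) ^ (a + s) *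
        (l : ℤ) ^ (n + 1 - (2 * a + s)) * ballot n a (s - 1) =
      if s = 0 then 0 else ∑ a ∈ range (n + 1), (d : ℤ) * ((u : ℤ) ^ a * (d : ℤ) ^ (a + (s - 1)) *
        (l : ℤ) ^ (n - (2 * a + (s - 1))) * ballot n a (s - 1 : ℕ)) := by
    rcases s with _ | s
    · simp [ballot_neg_one]
    rw [if_neg (Nat.succ_ne_zero s), Nat.add_sub_cancel, Nat.cast_succ, add_sub_cancel_right,
      sum_range_mul_ballot s _ (by omega)]
    refine sum_congr rfl fun a _ => ?_
    rw [show n + 1 - (2 * a + (s + 1)) = n - (2 * a + s) by omega]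
    ring
  rw [hup, hlevel, hdown]
  split_ifs <;> ring

theorem motzkinCount_eq_ballotSum (u l d n s : ℕ) :
    (motzkinCount 1 (fun _ => u) l (fun _ => d) s 0 n : ℤ) = ballotSum u l d s n := by
  induction n generalizing s with
  | zero =>
    rcases s with _ | s
    · simp [motzkinCount_zero, ballotSum, ballot, trinomial, intChoose]
    · simp [motzkinCount_zero, ballotSum, ballot, trinomial_eq_zero_of_lt]
  | succ n ih =>
    rw [motzkinCount_one_succ, ballotSum_succ]
    push_cast [apply_ite (Nat.cast : ℕ → ℤ)]
    simp only [ih]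

theorem descFactorial_recursion (m b : ℕ) :
    ((m : ℤ) + 4) * (m + 2).descFactorial (2 * b + 2) =
      (2 * m + 5) * (m + 1).descFactorial (2 * b + 2) +
        4 * (m + 1) * ((b + 1) * (b + 2)) * m.descFactorial (2 * b) -
        (m + 1) * m.descFactorial (2 * b + 2) := by
  simp only [succ_descFactorial_succ, descFactorial_succ]
  rcases le_or_gt (2 * b) m with h | h
  · obtain ⟨x, rfl⟩ := Nat.exists_eq_add_of_le h
    rw [show 2 * b + x - 2 * b = x by omega, show 2 * b + x - (2 * b + 1) = x - 1 by omega]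
    rcases x with _ | x <;> push_cast <;> ring
  · simp [descFactorial_of_lt h]

theorem ballot_zero_recursion (m a : ℕ) :
    ((m : ℤ) + 4) * ballot (m + 2) a 0 =
      (2 * m + 5) * ballot (m + 1) a 0 + 4 * (m + 1) * ballot m (a - 1 : ℤ) 0 -
        (m + 1) * ballot m a 0 := by
  rcases a with _ | b
  · have h (n : ℕ) : ballot n 0 0 = 1 := by simpa using ballot_zero_mul_factorial n 0
    simp only [Nat.cast_zero, h, zero_sub, ballot_of_neg 0 (by norm_num : (-1 : ℤ) < 0)]
    ring
  have hfac : ((b + 1)! * (b + 1 + 1)! : ℕ) = (b ! * (b + 1)! : ℕ) * ((b + 1) * (b + 2)) := by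
    simp only [factorial_succ]; ring
  have hD (n : ℕ) : ballot n (b + 1 : ℕ) 0 * ((b + 1)! * (b + 1 + 1)! : ℕ) =
      n.descFactorial (2 * b + 2) := ballot_zero_mul_factorial n (b + 1)
  have hprev := ballot_zero_mul_factorial m b
  apply mul_right_cancel₀ (b := (((b + 1)! * (b + 1 + 1)! : ℕ) : ℤ)) (by positivity)
  rw [Nat.cast_succ, add_sub_cancel_right]
  rw [hfac] at hD ⊢
  push_cast at hD hprev ⊢
  linear_combination ((m : ℤ) + 4) * hD (m + 2) - (2 * (m : ℤ) + 5) * hD (m + 1) -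
    4 * ((m : ℤ) + 1) * ((b + 1) * (b + 2)) * hprev + ((m : ℤ) + 1) * hD m +
    descFactorial_recursion m b

theorem pow_mul_ballotSum_zero (u l d : ℕ) {n N : ℕ} (j : ℕ) (hN : n + 1 ≤ N) :
    (l : ℤ) ^ j * ballotSum u l d 0 n =
      ∑ a ∈ range N, ((u : ℤ) * d) ^ a * (l : ℤ) ^ (n + j - 2 * a) * ballot n a 0 := by
  have h := sum_range_mul_ballot (n := n) 0
    (fun a => ((u : ℤ) * d) ^ a * (l : ℤ) ^ (n + j - 2 * a)) hN
  rw [Nat.cast_zero] at h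
  rw [h, ballotSum, mul_sum]
  refine sum_congr rfl fun a _ => ?_
  simp only [Nat.cast_zero, add_zero]
  rcases le_or_gt (2 * a) n with ha | ha
  · rw [show n + j - 2 * a = n - 2 * a + j by omega, pow_add]
    ring
  · rw [ballot_eq_zero_of_lt (by omega)]
    ring

theorem ballotSum_zero_recursion (u l d m : ℕ) :
    ((m : ℤ) + 4) * ballotSum u l d 0 (m + 2) =
      l * (2 * m + 5) * ballotSum u l d 0 (m + 1) +
        (4 * u * d - l ^ 2) * (m + 1) * ballotSum u l d 0 m := by
  set w : ℕ → ℤ := fun a => ((u : ℤ) * d) ^ a * (l : ℤ) ^ (m + 2 - 2 * a)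
  have h0 := pow_mul_ballotSum_zero u l d (n := m + 2) (N := m + 3) 0 (by omega)
  have h1 := pow_mul_ballotSum_zero u l d (n := m + 1) (N := m + 3) 1 (by omega)
  have h2 := pow_mul_ballotSum_zero u l d (n := m) (N := m + 3) 2 (by omega)
  have hud : (u : ℤ) * d * ballotSum u l d 0 m =
      ∑ a ∈ range (m + 3), w a * ballot m (a - 1 : ℤ) 0 := by
    have hm := pow_mul_ballotSum_zero u l d (n := m) (N := m + 2) 0 (by omega)
    rw [pow_zero, one_mul] at hm
    rw [sum_range_succ', Nat.cast_zero, zero_sub, ballot_of_neg 0 (by norm_num), mul_zero, add_zero,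
      hm, mul_sum]
    refine sum_congr rfl fun a _ => ?_
    simp only [w, Nat.cast_succ, add_sub_cancel_right]
    rw [show m + 2 - 2 * (a + 1) = m + 0 - 2 * a by omega, pow_succ]
    ring
  rw [pow_zero, one_mul, add_zero] at h0
  rw [pow_one, show m + 1 + 1 = m + 2 from rfl] at h1
  calc ((m : ℤ) + 4) * ballotSum u l d 0 (m + 2)
      = ∑ a ∈ range (m + 3), w a * (((m : ℤ) + 4) * ballot (m + 2) a 0) := by
        rw [h0, mul_sum]
        exact sum_congr rfl fun a _ => by ring
    _ = ∑ a ∈ range (m + 3), ((2 * m + 5) * (w a * ballot (m + 1) a 0) +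
          4 * (m + 1) * (w a * ballot m (a - 1 : ℤ) 0) - (m + 1) * (w a * ballot m a 0)) :=
        sum_congr rfl fun a _ => by rw [ballot_zero_recursion]; ring
    _ = _ := by
        rw [sum_sub_distrib, sum_add_distrib, ← mul_sum, ← mul_sum, ← mul_sum, ← hud, ← h1, ← h2]
        ring

end Motzkin

/-- `(n+2)·m_n^{(u,l,d)} = l·(2n+1)·m_{n-1}^{(u,l,d)} + (4ud−l²)·(n−1)·m_{n-2}^{(u,l,d)}`. -/
theorem motzkin_recursion (u l d : ℕ) (n : ℕ) (hn : 2 ≤ n) :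
    ((n : ℤ) + 2) * (motzkinCount 1 (fun _ => u) l (fun _ => d) 0 0 n : ℤ) =
      (l : ℤ) * (2 * (n : ℤ) + 1) * (motzkinCount 1 (fun _ => u) l (fun _ => d) 0 0 (n - 1) : ℤ)
        + (4 * (u : ℤ) * (d : ℤ) - (l : ℤ) ^ 2) * ((n : ℤ) - 1) *
            (motzkinCount 1 (fun _ => u) l (fun _ => d) 0 0 (n - 2) : ℤ) := by
  obtain ⟨m, rfl⟩ := Nat.exists_eq_add_of_le' hn
  simp only [Nat.add_sub_cancel, show m + 2 - 1 = m + 1 from rfl,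
    Motzkin.motzkinCount_eq_ballotSum]
  push_cast
  linear_combination Motzkin.ballotSum_zero_recursion u l d m
end

section
/- For all natural numbers u, l, d, the generating function M(x) = Σ_{n≥0} m_n^{(u,l,d)} x^n ∈ ℚ⟦x⟧ satisfies the functional equation M(x) = 1 + l·x·M(x) + u·d·x²·M(x)². -/
open PowerSeries Finset

/-!
Let `F s` be the generating function of weighted paths from height `s` down to `0`. Splitting off
the first step gives `F 0 = 1 + x (u F 1 + l F 0)` and `F (s+1) = x (u F (s+2) + l F (s+1) + d F s)`.
These recurrences force `F (s+1) = d x F 0 F s`, the identity that cutting a path at its first visit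
to height `s` would give: the defects `F (s+1) - d x F 0 F s` are `x` times a linear combination of
defects, so they are divisible by every power of `x`. For `s = 0`, substituting `F 1 = d x M²` into
the first recurrence gives the functional equation of `M = F 0`.
-/

namespace PowerSeries

variable {R : Type*} [CommRing R]

theorem eq_zero_of_forall_X_pow_dvd {φ : R⟦X⟧} (h : ∀ n, X ^ n ∣ φ) : φ = 0 := by
  ext m
  exact X_pow_dvd_iff.mp (h (m + 1)) m m.lt_succ_self

theorem first_passage_decomposition {u l d : R} {F : ℕ → R⟦X⟧}
    (h0 : F 0 = 1 + X * (C u * F 1 + C l * F 0))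
    (hs : ∀ s, F (s + 1) = X * (C u * F (s + 2) + C l * F (s + 1) + C d * F s)) (s : ℕ) :
    F (s + 1) = C d * X * F 0 * F s := by
  set E : ℕ → R⟦X⟧ := fun s => F (s + 1) - C d * X * F 0 * F s with hE
  have hE_rec (s : ℕ) :
      E s = X * (C u * E (s + 1) + C l * E s + C u * C d * X * (F 0 * E s - F s * E 0)) := by
    simp only [hE]
    linear_combination hs s - C d * X * F s * h0
  have hE_dvd (n : ℕ) : ∀ s, X ^ n ∣ E s := by
    induction n with
    | zero => simp
    | succ n ih =>
      intro s
      rw [hE_rec, pow_succ']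
      exact mul_dvd_mul_left X (by apply_rules [dvd_add, dvd_sub, Dvd.dvd.mul_left])
  exact sub_eq_zero.mp (eq_zero_of_forall_X_pow_dvd fun n => hE_dvd n s)

end PowerSeries

section PathCount

variable (r : ℕ) (u : ℕ → ℕ) (l : ℕ) (d : ℕ → ℕ)

def IsNonnegPath (h : ℤ) (t : ℕ) {n : ℕ} (f : Fin n → Fin (2 * r + 1)) : Prop :=
  (∀ k : Fin (n + 1), 0 ≤ h + ∑ i : Fin n, if (i : ℕ) < (k : ℕ) then ((f i : ℤ) - r) else 0) ∧
    h + ∑ i : Fin n, ((f i : ℤ) - r) = t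

instance (h : ℤ) (t : ℕ) {n : ℕ} (f : Fin n → Fin (2 * r + 1)) :
    Decidable (IsNonnegPath r h t f) := by
  unfold IsNonnegPath; infer_instance

/-- `motzkinCount` with an integer starting height, so that a first step below the axis leads to
a count of `0` instead of a truncated natural subtraction. -/
def pathCount (h : ℤ) (t n : ℕ) : ℕ :=
  ∑ f : Fin n → Fin (2 * r + 1),
    if IsNonnegPath r h t f then ∏ i : Fin n, stepWeight u l d ((f i : ℤ) - r) else 0

theorem motzkinCount_eq_pathCount (s t n : ℕ) :
    motzkinCount r u l d s t n = pathCount r u l d s t n := rfl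

variable {r u l d}

theorem IsNonnegPath.nonneg {h : ℤ} {t n : ℕ} {f : Fin n → Fin (2 * r + 1)}
    (hf : IsNonnegPath r h t f) : 0 ≤ h := by
  simpa using hf.1 0

theorem isNonnegPath_cons {h : ℤ} {t n : ℕ} (z : Fin (2 * r + 1)) (g : Fin n → Fin (2 * r + 1)) :
    IsNonnegPath r h t (Fin.cons z g : Fin (n + 1) → Fin (2 * r + 1)) ↔
      0 ≤ h ∧ IsNonnegPath r (h + (z - r)) t g := by
  simp only [IsNonnegPath, Fin.forall_fin_succ, Fin.sum_univ_succ, Fin.cons_zero, Fin.cons_succ,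
    Fin.val_zero, Fin.val_succ, Nat.add_lt_add_iff_right, Nat.lt_irrefl, Nat.zero_lt_succ,
    Nat.not_lt_zero, if_true, if_false, Finset.sum_const_zero, add_zero, ← add_assoc, and_assoc]

theorem pathCount_of_neg {h : ℤ} (hh : h < 0) (t n : ℕ) : pathCount r u l d h t n = 0 :=
  Finset.sum_eq_zero fun _ _ => if_neg fun hf => hh.not_ge hf.nonneg

theorem pathCount_succ {h : ℤ} (hh : 0 ≤ h) (t n : ℕ) :
    pathCount r u l d h t (n + 1) =
      ∑ z : Fin (2 * r + 1), stepWeight u l d (z - r) * pathCount r u l d (h + (z - r)) t n := by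
  rw [pathCount, ← (Fin.consEquiv fun _ => Fin (2 * r + 1)).sum_comp, Fintype.sum_prod_type]
  refine Finset.sum_congr rfl fun z _ => ?_
  rw [pathCount, Finset.mul_sum]
  refine Finset.sum_congr rfl fun g _ => ?_
  simp [Fin.consEquiv, isNonnegPath_cons, hh, Fin.prod_univ_succ]

theorem pathCount_one_succ {h : ℤ} (hh : 0 ≤ h) (t n : ℕ) :
    pathCount 1 u l d h t (n + 1) = d 1 * pathCount 1 u l d (h - 1) t n
      + l * pathCount 1 u l d h t n + u 1 * pathCount 1 u l d (h + 1) t n := by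
  rw [pathCount_succ hh, Fin.sum_univ_three]
  norm_num [stepWeight, sub_eq_add_neg]

theorem motzkinCount_zero (s t : ℕ) :
    motzkinCount r u l d s t 0 = if s = t then 1 else 0 := by
  simp [motzkinCount]

theorem motzkinCount_one_zero_succ (t n : ℕ) :
    motzkinCount 1 u l d 0 t (n + 1) =
      u 1 * motzkinCount 1 u l d 1 t n + l * motzkinCount 1 u l d 0 t n := by
  rw [motzkinCount_eq_pathCount, Nat.cast_zero, pathCount_one_succ le_rfl,
    pathCount_of_neg (by norm_num : (0 : ℤ) - 1 < 0), mul_zero, zero_add, add_comm]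
  rfl

theorem motzkinCount_one_succ_succ (s t n : ℕ) :
    motzkinCount 1 u l d (s + 1) t (n + 1) = u 1 * motzkinCount 1 u l d (s + 2) t n
      + l * motzkinCount 1 u l d (s + 1) t n + d 1 * motzkinCount 1 u l d s t n := by
  have below : ((s + 1 : ℕ) : ℤ) - 1 = s := by push_cast; ring
  have above : ((s + 1 : ℕ) : ℤ) + 1 = (s + 2 : ℕ) := by push_cast; ring
  rw [motzkinCount_eq_pathCount, pathCount_one_succ (by positivity), below, above]
  simp only [motzkinCount_eq_pathCount]
  ring

theorem motzkinGF_one_zero :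
    motzkinGF 1 u l d 0 0 =
      1 + X * (C (u 1 : ℚ) * motzkinGF 1 u l d 1 0 + C (l : ℚ) * motzkinGF 1 u l d 0 0) := by
  ext (_ | n)
  · simp [motzkinGF, motzkinCount_zero]
  · simp only [motzkinGF, coeff_succ_X_mul, map_add, coeff_C_mul, coeff_mk, coeff_one,
      motzkinCount_one_zero_succ]
    simp

theorem motzkinGF_one_succ (s : ℕ) :
    motzkinGF 1 u l d (s + 1) 0 =
      X * (C (u 1 : ℚ) * motzkinGF 1 u l d (s + 2) 0 + C (l : ℚ) * motzkinGF 1 u l d (s + 1) 0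
        + C (d 1 : ℚ) * motzkinGF 1 u l d s 0) := by
  ext (_ | n)
  · simp [motzkinGF, motzkinCount_zero]
  · simp only [motzkinGF, coeff_succ_X_mul, map_add, coeff_C_mul, coeff_mk,
      motzkinCount_one_succ_succ]
    norm_cast

end PathCount

/-- the generating function `M(x) = Σ_{n≥0} m_n^{(u,l,d)} xⁿ` satisfies
`M = 1 + l·x·M + u·d·x²·M²`. -/
theorem motzkin_gf_eq (u l d : ℕ) :
    motzkinGF 1 (fun _ => u) l (fun _ => d) 0 0 =
      1 + C (l : ℚ) * X * motzkinGF 1 (fun _ => u) l (fun _ => d) 0 0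
        + C ((u : ℚ) * (d : ℚ)) * X ^ 2 * (motzkinGF 1 (fun _ => u) l (fun _ => d) 0 0) ^ 2 := by
  have h0 := motzkinGF_one_zero (u := fun _ => u) (l := l) (d := fun _ => d)
  have h1 := first_passage_decomposition
    (F := fun s => motzkinGF 1 (fun _ => u) l (fun _ => d) s 0) h0 motzkinGF_one_succ 0
  rw [map_mul]
  linear_combination h0 + X * C (u : ℚ) * h1
end

section
/- For all natural numbers u, l, d, the generating function M(x) = Σ_{n≥0} m_n^{(u,l,d)} x^n ∈ ℚ⟦x⟧ satisfies M(x) = Σ_{j≥0} (1/(j+1)) · C(2j, j) · u^j d^j x^{2j} / (1−lx)^{2j+1}, i.e., M(x) equals the composition (1/(1−lx)) · C(udx²/(1−lx)²), where C(y) = Σ_{n≥0} (1/(n+1)) C(2n,n) y^n is the generating function of the Catalan numbers and the substituted series udx²/(1−lx)² has zero constant term. -/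
open PowerSeries Finset

/-!
A Motzkin path from height `s` down to `0` splits at its first visits to heights `s-1, …, 0`
into `s` down-steps and `s+1` Motzkin paths, so its generating function is `(d x)^s M^(s+1)`;
splitting off the first step shows that the coefficients of these series satisfy the same
recurrence as the path counts, once `M = 1 + l x M + u d x² M²`. That equation is solved by
`M = W · C(u d x² W²)` with `W = 1/(1 - l x)`, because the Catalan series satisfies
`C = 1 + y C²`; expanding the substitution termwise gives the claimed sum.
-/

section
variable {R : Type*} [CommRing R] {a : R⟦X⟧}

theorem subst_map_catalanSeries_sq_mul_add_one (ha : HasSubst a) :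
    ((catalanSeries.map (Nat.castRingHom R)).subst a) ^ 2 * a + 1 =
      (catalanSeries.map (Nat.castRingHom R)).subst a := by
  conv_rhs => rw [← catalanSeries_sq_mul_X_add_one]
  rw [map_add, map_mul, map_pow, map_X, map_one, ← coe_substAlgHom ha, map_add, map_mul, map_pow,
    map_one, coe_substAlgHom, subst_X ha]

theorem coeff_pow_eq_zero_of_constantCoeff_eq_zero (ha : constantCoeff a = 0) {n j : ℕ}
    (h : n < j) : coeff n (a ^ j) = 0 :=
  X_pow_dvd_iff.mp (pow_dvd_pow_of_dvd (X_dvd_iff.mpr ha) j) n h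

theorem coeff_subst_eq_sum_range (ha : constantCoeff a = 0) (f : R⟦X⟧) {n N : ℕ}
    (hN : n < N) :
    coeff n (f.subst a) = ∑ j ∈ range N, coeff j f * coeff n (a ^ j) := by
  rw [coeff_subst' (HasSubst.of_constantCoeff_zero' ha)]
  apply finsum_eq_sum_of_support_subset
  intro j hj
  rw [coe_range, Set.mem_Iio]
  by_contra hjN
  exact hj (by
    simp only [coeff_pow_eq_zero_of_constantCoeff_eq_zero ha (show n < j by omega), smul_zero])

theorem coeff_mul_subst_eq_sum_range (ha : constantCoeff a = 0) (f g : R⟦X⟧) {n N : ℕ}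
    (hN : n < N) :
    coeff n (g * f.subst a) = ∑ j ∈ range N, coeff j f * coeff n (g * a ^ j) := by
  simp_rw [coeff_mul, mul_sum]
  rw [sum_comm]
  refine sum_congr rfl fun p hp => ?_
  have hp : p.2 < N := lt_of_le_of_lt (mem_antidiagonal.mp hp ▸ Nat.le_add_left _ _) hN
  rw [coeff_subst_eq_sum_range ha f hp, mul_sum]
  exact sum_congr rfl fun j _ => by ring

end

section
variable {k : Type*} [Field k]

noncomputable def motzkinSeries (a b : k) : k⟦X⟧ :=
  (1 - C a * X)⁻¹ *
    (catalanSeries.map (Nat.castRingHom k)).subst (C b * X ^ 2 * ((1 - C a * X)⁻¹) ^ 2)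

theorem motzkinSeries_eq (a b : k) :
    motzkinSeries a b = 1 + C a * X * motzkinSeries a b + C b * X ^ 2 * motzkinSeries a b ^ 2 := by
  set W : k⟦X⟧ := (1 - C a * X)⁻¹
  set K := (catalanSeries.map (Nat.castRingHom k)).subst (C b * X ^ 2 * W ^ 2)
  have hW : (1 - C a * X) * W = 1 := PowerSeries.mul_inv_cancel _ (by simp)
  have hK : K ^ 2 * (C b * X ^ 2 * W ^ 2) + 1 = K :=
    subst_map_catalanSeries_sq_mul_add_one (HasSubst.of_constantCoeff_zero' (by simp))
  change W * K = 1 + C a * X * (W * K) + C b * X ^ 2 * (W * K) ^ 2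
  linear_combination K * hW - hK

theorem coeff_motzkinSeries (a b : k) (n : ℕ) :
    coeff n (motzkinSeries a b) = ∑ j ∈ range (n / 2 + 1),
      coeff n (C (catalan j * b ^ j) * X ^ (2 * j) * ((1 - C a * X)⁻¹) ^ (2 * j + 1)) := by
  have hterm (j : ℕ) :
      coeff n (C (catalan j * b ^ j) * X ^ (2 * j) * ((1 - C a * X)⁻¹) ^ (2 * j + 1)) =
      coeff j (catalanSeries.map (Nat.castRingHom k)) *
        coeff n ((1 - C a * X)⁻¹ * (C b * X ^ 2 * ((1 - C a * X)⁻¹) ^ 2) ^ j) := by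
    rw [coeff_map, catalanSeries_coeff, ← coeff_C_mul]
    congr 1
    simp only [map_mul, map_pow, Nat.coe_castRingHom, map_natCast]
    ring
  rw [motzkinSeries, coeff_mul_subst_eq_sum_range (by simp) _ _ (Nat.lt_succ_self n)]
  simp_rw [hterm]
  refine (sum_subset (range_subset_range.mpr (by omega)) fun j _ hj => ?_).symm
  rw [mem_range, not_lt] at hj
  have hX : (1 - C a * X)⁻¹ * (C b * X ^ 2 * ((1 - C a * X)⁻¹) ^ 2) ^ j =
      X ^ (2 * j) * (C b ^ j * ((1 - C a * X)⁻¹) ^ (2 * j + 1)) := by ring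
  rw [hX, coeff_X_pow_mul', if_neg (by omega), mul_zero]

end

section
variable (r : ℕ) (u : ℕ → ℕ) (l : ℕ) (d : ℕ → ℕ)

def walkHeight {n : ℕ} (s : ℤ) (f : Fin n → Fin (2 * r + 1)) (k : ℕ) : ℤ :=
  s + ∑ i : Fin n, if (i : ℕ) < k then ((f i : ℤ) - r) else 0

/-- `motzkinCount` with an integer start height: splitting off a first down-step from height `0`
leads to height `-1`, where the count is `0`. -/
def walkCount (s : ℤ) (t n : ℕ) : ℕ :=
  ∑ f : Fin n → Fin (2 * r + 1),
    if (∀ k : Fin (n + 1), 0 ≤ walkHeight r s f k) ∧ walkHeight r s f n = t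
    then ∏ i : Fin n, stepWeight u l d ((f i : ℤ) - r)
    else 0

theorem motzkinCount_eq_walkCount (s t n : ℕ) :
    motzkinCount r u l d s t n = walkCount r u l d s t n := by
  simp only [motzkinCount, walkCount, walkHeight, Fin.is_lt, if_true]

variable {r}

@[simp]
theorem walkHeight_zero {n : ℕ} (s : ℤ) (f : Fin n → Fin (2 * r + 1)) :
    walkHeight r s f 0 = s := by
  simp [walkHeight]

theorem walkHeight_cons_succ {n : ℕ} (s : ℤ) (c : Fin (2 * r + 1)) (g : Fin n → Fin (2 * r + 1))
    (k : ℕ) : walkHeight r s (Fin.cons c g : Fin (n + 1) → Fin (2 * r + 1)) (k + 1) =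
      walkHeight r (s + ((c : ℤ) - r)) g k := by
  simp only [walkHeight, Fin.sum_univ_succ, Fin.cons_zero, Fin.cons_succ, Fin.val_zero,
    Fin.val_succ, Nat.add_lt_add_iff_right, Nat.zero_lt_succ, if_true]
  ring

theorem walkCount_of_neg {s : ℤ} (hs : s < 0) (t n : ℕ) : walkCount r u l d s t n = 0 :=
  Finset.sum_eq_zero fun f _ => if_neg fun h => by
    have h0 := h.1 0
    rw [Fin.val_zero, walkHeight_zero] at h0
    omega

theorem walkCount_zero (s : ℤ) (t : ℕ) : walkCount r u l d s t 0 = if s = t then 1 else 0 := by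
  simp only [walkCount, Fin.val_eq_zero, walkHeight_zero, univ_unique,
    Fin.prod_univ_zero, sum_singleton]
  exact if_congr ⟨And.right, fun h => ⟨fun _ => h ▸ Int.natCast_nonneg t, h⟩⟩ rfl rfl

theorem walkCount_succ {s : ℤ} (hs : 0 ≤ s) (t n : ℕ) :
    walkCount r u l d s t (n + 1) = ∑ c : Fin (2 * r + 1),
      stepWeight u l d ((c : ℤ) - r) * walkCount r u l d (s + ((c : ℤ) - r)) t n := by
  rw [walkCount, ← (Fin.consEquiv fun _ => Fin (2 * r + 1)).sum_comp, Fintype.sum_prod_type]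
  refine Finset.sum_congr rfl fun c _ => ?_
  rw [walkCount, Finset.mul_sum]
  refine Finset.sum_congr rfl fun g _ => ?_
  have hwalk : ((∀ k : Fin (n + 2), 0 ≤ walkHeight r s (Fin.cons c g : Fin (n + 1) → _) k) ∧
        walkHeight r s (Fin.cons c g : Fin (n + 1) → _) (n + 1) = t) ↔
      (∀ k : Fin (n + 1), 0 ≤ walkHeight r (s + ((c : ℤ) - r)) g k) ∧
        walkHeight r (s + ((c : ℤ) - r)) g n = t := by
    simp only [Fin.forall_fin_succ (n := n + 1), Fin.val_zero, walkHeight_zero, Fin.val_succ,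
      walkHeight_cons_succ, hs, true_and]
  have hcons : Fin.consEquiv (fun _ => Fin (2 * r + 1)) (c, g) = Fin.cons c g := rfl
  rw [hcons, mul_ite, mul_zero, Fin.prod_univ_succ]
  exact if_congr hwalk (by simp only [Fin.cons_zero, Fin.cons_succ]) rfl

end

theorem walkCount_one_succ (u l d : ℕ) {s : ℤ} (hs : 0 ≤ s) (t n : ℕ) :
    walkCount 1 (fun _ => u) l (fun _ => d) s t (n + 1) =
      d * walkCount 1 (fun _ => u) l (fun _ => d) (s - 1) t n +
        l * walkCount 1 (fun _ => u) l (fun _ => d) s t n +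
          u * walkCount 1 (fun _ => u) l (fun _ => d) (s + 1) t n := by
  rw [walkCount_succ _ _ _ hs, Fin.sum_univ_three]
  norm_num [stepWeight, sub_eq_add_neg]

section
variable {R : Type*} [CommRing R] {u l d : ℕ} {S : R⟦X⟧}

noncomputable def descentSeries (c : R) (M : R⟦X⟧) (s : ℕ) : R⟦X⟧ :=
  (C c * X) ^ s * M ^ (s + 1)

theorem descentSeries_zero_eq
    (hS : S = 1 + C (l : R) * X * S + C ((u : R) * d) * X ^ 2 * S ^ 2) :
    descentSeries (d : R) S 0 = 1 + X * (C (l : R) * descentSeries (d : R) S 0 +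
      C (u : R) * descentSeries (d : R) S 1) := by
  rw [map_mul] at hS
  simp only [descentSeries]
  linear_combination hS

theorem descentSeries_succ_eq
    (hS : S = 1 + C (l : R) * X * S + C ((u : R) * d) * X ^ 2 * S ^ 2) (s : ℕ) :
    descentSeries (d : R) S (s + 1) =
      X * (C (d : R) * descentSeries (d : R) S s + C (l : R) * descentSeries (d : R) S (s + 1) +
        C (u : R) * descentSeries (d : R) S (s + 2)) := by
  rw [map_mul] at hS
  simp only [descentSeries]
  linear_combination ((C (d : R) * X) ^ (s + 1) * S ^ (s + 1)) * hS

theorem cast_walkCount_eq_coeff_descentSeries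
    (hS : S = 1 + C (l : R) * X * S + C ((u : R) * d) * X ^ 2 * S ^ 2) (n s : ℕ) :
    (walkCount 1 (fun _ => u) l (fun _ => d) s 0 n : R) = coeff n (descentSeries (d : R) S s) := by
  induction n generalizing s with
  | zero =>
    have hS0 : constantCoeff S = 1 := by simpa using congrArg constantCoeff hS
    cases s with
    | zero => simp [walkCount_zero, descentSeries, hS0]
    | succ s => simp [walkCount_zero, descentSeries]; omega
  | succ n ih =>
    rw [walkCount_one_succ u l d (Int.natCast_nonneg s)]
    cases s with
    | zero =>
      rw [descentSeries_zero_eq hS, map_add, coeff_succ_X_mul, map_add, coeff_C_mul, coeff_C_mul,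
        ← ih, ← ih, walkCount_of_neg _ _ _ (show ((0 : ℕ) : ℤ) - 1 < 0 by norm_num)]
      simp
    | succ s =>
      rw [descentSeries_succ_eq hS, coeff_succ_X_mul, map_add, map_add, coeff_C_mul, coeff_C_mul,
        coeff_C_mul, ← ih, ← ih, ← ih]
      push_cast [add_sub_cancel_right, add_assoc, one_add_one_eq_two]
      rfl

end

theorem cast_catalan_eq {K : Type*} [Field K] [CharZero K] (j : ℕ) :
    (catalan j : K) = 1 / ((j : K) + 1) * ((2 * j).choose j : K) := by
  rw [← Nat.centralBinom_eq_two_mul_choose, ← succ_mul_catalan_eq_centralBinom]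
  push_cast
  field_simp

/-- The infinite sum is stated coefficientwise: the `j`-th summand is divisible by `x^{2j}`,
so only the terms with `j ≤ n / 2` contribute to the `n`-th coefficient. -/
theorem motzkin_gf_catalan_expansion (u l d : ℕ) (n : ℕ) :
    coeff n (motzkinGF 1 (fun _ => u) l (fun _ => d) 0 0) =
      ∑ j ∈ Finset.range (n / 2 + 1),
        coeff n
          (C ((1 / ((j : ℚ) + 1)) * (Nat.choose (2 * j) j : ℚ) * (u : ℚ) ^ j * (d : ℚ) ^ j) *
            X ^ (2 * j) * ((1 - C (l : ℚ) * X)⁻¹) ^ (2 * j + 1)) := by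
  have hM := motzkinSeries_eq (l : ℚ) ((u : ℚ) * d)
  rw [motzkinGF, coeff_mk, motzkinCount_eq_walkCount, cast_walkCount_eq_coeff_descentSeries hM n 0,
    descentSeries, pow_zero, one_mul, zero_add, pow_one, coeff_motzkinSeries]
  refine sum_congr rfl fun j _ => ?_
  rw [cast_catalan_eq, mul_pow, ← mul_assoc]
end

section
/- Fix a rank r ≥ 1 and natural number weights u_1,…,u_r, l, d_1,…,d_r, and let A_{s,t}(x) = Σ_{n≥0} |𝒜_{s,t}(n)| x^n ∈ ℚ⟦x⟧. Then for all j with 1 ≤ j ≤ r−1, the generating functions satisfy A_{0,j} = x·A_{0,0}·Σ_{p=1}^{r} u_p A_{p−1,j−1}. -/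
open PowerSeries Finset

/-!
A nonnegative path from height `0` to height `j ≥ 1` splits uniquely at its last visit to the
axis, after `a` steps: an excursion from `0` to `0` of length `a`, an up-step `U_p`, and a path
from `p` to `j` that stays at height `≥ 1`, which is a path from `p - 1` to `j - 1` shifted up by
one. The weights multiply along the splitting, so comparing coefficients of `x^(n+1)` gives the
identity.
-/

theorem Fin.comp_append {α β : Type*} {a b : ℕ} (g : α → β) (x : Fin a → α) (y : Fin b → α) :
    g ∘ Fin.append x y = Fin.append (g ∘ x) (g ∘ y) := by
  funext i
  refine Fin.addCases (fun i => ?_) (fun i => ?_) i <;> simp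

theorem Fin.sum_pi_append_cons {α M : Type*} [Fintype α] [AddCommMonoid M] {a b : ℕ}
    (F : (Fin (a + (b + 1)) → α) → M) :
    ∑ f, F f = ∑ x : Fin a → α, ∑ c, ∑ y : Fin b → α, F (Fin.append x (Fin.cons c y)) := by
  rw [← (Fin.appendEquiv a (b + 1)).sum_comp, Fintype.sum_prod_type]
  refine sum_congr rfl fun x _ => ?_
  rw [← (Fin.consEquiv fun _ => α).sum_comp, Fintype.sum_prod_type]
  rfl

namespace LatticePath

section Heights

variable {a b n : ℕ}

def prefixSum (z : Fin n → ℤ) (k : ℕ) : ℤ :=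
  ∑ i : Fin n, if (i : ℕ) < k then z i else 0

@[simp]
theorem prefixSum_zero (z : Fin n → ℤ) : prefixSum z 0 = 0 := by
  simp [prefixSum]

theorem prefixSum_of_le (z : Fin n → ℤ) {k : ℕ} (hk : n ≤ k) : prefixSum z k = ∑ i, z i :=
  sum_congr rfl fun i _ => if_pos (by omega)

theorem prefixSum_append_of_le (x : Fin a → ℤ) (y : Fin b → ℤ) {k : ℕ} (hk : k ≤ a) :
    prefixSum (Fin.append x y) k = prefixSum x k := by
  rw [prefixSum, Fin.sum_univ_add]
  simp [prefixSum, show ∀ i : Fin b, ¬ a + (i : ℕ) < k from fun i => by omega]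

theorem prefixSum_append_add (x : Fin a → ℤ) (y : Fin b → ℤ) (k : ℕ) :
    prefixSum (Fin.append x y) (a + k) = ∑ i, x i + prefixSum y k := by
  rw [prefixSum, Fin.sum_univ_add]
  simp [prefixSum, show ∀ i : Fin a, (i : ℕ) < a + k from fun i => by omega]

theorem prefixSum_cons_succ (c : ℤ) (y : Fin n → ℤ) (k : ℕ) :
    prefixSum (Fin.cons c y : Fin (n + 1) → ℤ) (k + 1) = c + prefixSum y k := by
  simp [prefixSum, Fin.sum_univ_succ]

def StaysNonneg (s : ℤ) (z : Fin n → ℤ) : Prop :=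
  ∀ k ≤ n, 0 ≤ s + prefixSum z k

instance (s : ℤ) (z : Fin n → ℤ) : Decidable (StaysNonneg s z) :=
  inferInstanceAs (Decidable (∀ k ≤ n, _))

theorem StaysNonneg.mono {s s' : ℤ} {z : Fin n → ℤ} (hz : StaysNonneg s z) (hs : s ≤ s') :
    StaysNonneg s' z :=
  fun k hk => (hz k hk).trans (by omega)

theorem staysNonneg_append {s : ℤ} {x : Fin a → ℤ} {y : Fin b → ℤ} :
    StaysNonneg s (Fin.append x y) ↔ StaysNonneg s x ∧ StaysNonneg (s + ∑ i, x i) y := by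
  constructor
  · intro H
    refine ⟨fun k hk => ?_, fun k hk => ?_⟩
    · simpa [prefixSum_append_of_le x y hk] using H k (by omega)
    · simpa [prefixSum_append_add, add_assoc] using H (a + k) (by omega)
  · rintro ⟨hx, hy⟩ k hk
    rcases le_or_gt k a with hka | hka
    · rw [prefixSum_append_of_le x y hka]
      exact hx k hka
    · obtain ⟨k, rfl⟩ := Nat.exists_eq_add_of_lt hka
      simpa [prefixSum_append_add, add_assoc] using hy (k + 1) (by omega)

theorem staysNonneg_cons {s c : ℤ} {y : Fin n → ℤ} :
    StaysNonneg s (Fin.cons c y : Fin (n + 1) → ℤ) ↔ 0 ≤ s ∧ StaysNonneg (s + c) y := by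
  constructor
  · intro H
    refine ⟨by simpa using H 0 (by omega), fun k hk => ?_⟩
    simpa [prefixSum_cons_succ, add_assoc] using H (k + 1) (by omega)
  · rintro ⟨hs, hy⟩ (_ | k) hk
    · simpa using hs
    · simpa [prefixSum_cons_succ, add_assoc] using hy k (by omega)

def IsPath (s t : ℤ) (z : Fin n → ℤ) : Prop :=
  StaysNonneg s z ∧ s + ∑ i, z i = t

instance (s t : ℤ) (z : Fin n → ℤ) : Decidable (IsPath s t z) :=
  inferInstanceAs (Decidable (_ ∧ _))

def IsLastZero (z : Fin n → ℤ) (a : ℕ) : Prop :=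
  prefixSum z a = 0 ∧ ∀ k, a < k → k ≤ n → 0 < prefixSum z k

theorem existsUnique_isLastZero {z : Fin n → ℤ} (hz : StaysNonneg 0 z) (hpos : 0 < ∑ i, z i) :
    ∃! a, IsLastZero z a := by
  classical
  have hle : ∀ a, prefixSum z a = 0 → a ≤ n := fun a ha => by
    by_contra! h
    rw [prefixSum_of_le z h.le] at ha
    omega
  set P : ℕ → Prop := (prefixSum z · = 0)
  have hP : P (Nat.findGreatest P n) := Nat.findGreatest_spec (Nat.zero_le n) (prefixSum_zero z)
  refine ⟨Nat.findGreatest P n, ⟨hP, fun k hk hkn => ?_⟩, ?_⟩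
  · have := Nat.findGreatest_is_greatest hk hkn
    have := hz k hkn
    omega
  · rintro a ⟨ha, hmax⟩
    refine le_antisymm (Nat.le_findGreatest (P := P) (hle a ha) ha) ?_
    by_contra! h
    exact (hmax _ h (Nat.findGreatest_le n)).ne' hP

theorem isLastZero_append_cons_iff {x : Fin a → ℤ} {c : ℤ} {y : Fin b → ℤ} :
    IsLastZero (Fin.append x (Fin.cons c y : Fin (b + 1) → ℤ)) a ↔
      ∑ i, x i = 0 ∧ StaysNonneg (c - 1) y := by
  rw [IsLastZero, prefixSum_append_of_le _ _ le_rfl, prefixSum_of_le x le_rfl]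
  refine and_congr_right fun hx => ⟨fun H k hk => ?_, fun H k hk hkn => ?_⟩
  · have := H (a + (k + 1)) (by omega) (by omega)
    rw [prefixSum_append_add, prefixSum_cons_succ] at this
    omega
  · obtain ⟨k, rfl⟩ := Nat.exists_eq_add_of_lt hk
    have := H k (by omega)
    rw [add_assoc, prefixSum_append_add, prefixSum_cons_succ]
    omega

theorem isPath_and_isLastZero_append_cons_iff {x : Fin a → ℤ} {c : ℤ} {y : Fin b → ℤ} {t : ℤ} :
    IsPath 0 t (Fin.append x (Fin.cons c y : Fin (b + 1) → ℤ)) ∧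
        IsLastZero (Fin.append x (Fin.cons c y : Fin (b + 1) → ℤ)) a ↔
      IsPath 0 0 x ∧ 0 < c ∧ IsPath (c - 1) (t - 1) y := by
  rw [IsPath, IsPath, IsPath, isLastZero_append_cons_iff, staysNonneg_append, staysNonneg_cons,
    Fin.sum_univ_add]
  simp only [Fin.append_left, Fin.append_right, Fin.sum_cons, zero_add]
  constructor
  · rintro ⟨⟨⟨hx, -, -⟩, hsum⟩, hx0, hy⟩
    have hc := hy 0 b.zero_le
    rw [prefixSum_zero] at hc
    exact ⟨⟨hx, hx0⟩, by omega, hy, by omega⟩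
  · rintro ⟨⟨hx, hx0⟩, -, hy, hsum⟩
    exact ⟨⟨⟨hx, by omega, hy.mono (by omega)⟩, by omega⟩, hx0, hy⟩

end Heights

section Count

variable {α R : Type*} [Fintype α] [CommSemiring R] (h : α → ℤ) (w : α → R)

def count (s t : ℤ) (n : ℕ) : R :=
  ∑ f : Fin n → α, if IsPath s t (h ∘ f) then ∏ i, w (f i) else 0

theorem count_length_zero_of_ne {s t : ℤ} (hst : s ≠ t) : count h w s t 0 = 0 := by
  simp [count, IsPath, hst]

open scoped Classical in
theorem count_eq_sum_isLastZero {t : ℤ} (ht : 0 < t) (N : ℕ) :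
    count h w 0 t N = ∑ a ∈ range N, ∑ f : Fin N → α,
      if IsPath 0 t (h ∘ f) ∧ IsLastZero (h ∘ f) a then ∏ i, w (f i) else 0 := by
  rw [count, sum_comm]
  refine sum_congr rfl fun f _ => ?_
  by_cases hf : IsPath 0 t (h ∘ f)
  · have hend := hf.2
    obtain ⟨a₀, ha₀, huniq⟩ := existsUnique_isLastZero hf.1 (by omega)
    have hlt : a₀ < N := by
      by_contra! hN
      have := ha₀.1
      rw [prefixSum_of_le _ hN] at this
      omega
    have hlast : ∀ a, IsLastZero (h ∘ f) a ↔ a = a₀ := fun a => ⟨huniq a, fun e => e ▸ ha₀⟩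
    simp only [hf, true_and, hlast, sum_ite_eq', mem_range, hlt, if_true]
  · simp only [hf, false_and, if_false, sum_const_zero]

-- The length `N` is only propositionally `a + (b + 1)`, so that this applies at length `n + 1`.
open scoped Classical in
theorem sum_isLastZero_eq (t : ℤ) {N : ℕ} (a b : ℕ) (hN : N = a + (b + 1)) :
    ∑ f : Fin N → α, (if IsPath 0 t (h ∘ f) ∧ IsLastZero (h ∘ f) a then ∏ i, w (f i) else 0) =
      count h w 0 0 a * ∑ c, if 0 < h c then w c * count h w (h c - 1) (t - 1) b else 0 := by
  subst hN
  rw [Fin.sum_pi_append_cons, count, sum_mul]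
  refine sum_congr rfl fun x _ => ?_
  have hcond : ∀ c (y : Fin b → α),
      IsPath 0 t (h ∘ Fin.append x (Fin.cons c y)) ∧
          IsLastZero (h ∘ Fin.append x (Fin.cons c y)) a ↔
        IsPath 0 0 (h ∘ x) ∧ 0 < h c ∧ IsPath (h c - 1) (t - 1) (h ∘ y) := fun c y => by
    rw [Fin.comp_append, Fin.comp_cons, isPath_and_isLastZero_append_cons_iff]
  have hweight : ∀ c (y : Fin b → α), ∏ i, w (Fin.append x (Fin.cons c y) i) =
      (∏ i, w (x i)) * (w c * ∏ i, w (y i)) := fun c y => by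
    simp [Fin.prod_univ_add, Fin.prod_univ_succ]
  simp only [hcond, hweight]
  by_cases hx : IsPath 0 0 (h ∘ x)
  · simp only [hx, true_and, if_true, count, mul_sum, mul_ite, mul_zero]
    refine sum_congr rfl fun c _ => ?_
    by_cases hc : 0 < h c <;> simp only [hc, true_and, false_and, if_true, if_false, sum_const_zero]
  · simp only [hx, false_and, if_false, sum_const_zero, zero_mul]

theorem count_zero_succ_of_pos {t : ℤ} (ht : 0 < t) (n : ℕ) :
    count h w 0 t (n + 1) = ∑ p ∈ antidiagonal n,
      count h w 0 0 p.1 * ∑ c, if 0 < h c then w c * count h w (h c - 1) (t - 1) p.2 else 0 := by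
  rw [count_eq_sum_isLastZero h w ht, Nat.sum_antidiagonal_eq_sum_range_succ
    (fun a b => count h w 0 0 a * ∑ c, if 0 < h c then w c * count h w (h c - 1) (t - 1) b else 0)]
  refine sum_congr rfl fun a ha => sum_isLastZero_eq h w t a (n - a) ?_
  have := mem_range.1 ha
  omega

end Count

end LatticePath

open LatticePath

theorem motzkinCount_eq_count (r : ℕ) (u : ℕ → ℕ) (l : ℕ) (d : ℕ → ℕ) (s t n : ℕ) :
    motzkinCount r u l d s t n =
      count (fun c : Fin (2 * r + 1) => (c : ℤ) - r) (fun c => stepWeight u l d ((c : ℤ) - r))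
        s t n := by
  refine sum_congr rfl fun f _ => if_congr (and_congr_left' ?_) rfl rfl
  exact ⟨fun H k hk => H ⟨k, by omega⟩, fun H k => H k (by omega)⟩

theorem sum_upStep_weight (r : ℕ) (u : ℕ → ℕ) (l : ℕ) (d : ℕ → ℕ) (F : ℤ → ℕ) :
    ∑ c : Fin (2 * r + 1),
        (if 0 < (c : ℤ) - r then stepWeight u l d ((c : ℤ) - r) * F ((c : ℤ) - r) else 0) =
      ∑ p ∈ Icc 1 r, u p * F p := by
  rw [Fin.sum_univ_eq_sum_range
      (fun c => if 0 < (c : ℤ) - r then stepWeight u l d ((c : ℤ) - r) * F ((c : ℤ) - r) else 0),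
    show 2 * r + 1 = (r + 1) + r by ring, sum_range_add, ← Ico_add_one_right_eq_Icc,
    sum_Ico_eq_sum_range, Nat.add_sub_cancel, sum_eq_zero fun c hc => if_neg ?_, zero_add]
  · refine sum_congr rfl fun k _ => ?_
    have hk : ((r + 1 + k : ℕ) : ℤ) - r = ((1 + k : ℕ) : ℤ) := by push_cast; ring
    rw [hk, if_pos (by positivity), stepWeight, if_pos (by positivity), Int.toNat_natCast]
  · have := mem_range.1 hc
    omega

theorem motzkinCount_zero_succ (r : ℕ) (u : ℕ → ℕ) (l : ℕ) (d : ℕ → ℕ) {j : ℕ} (hj : 1 ≤ j)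
    (n : ℕ) :
    motzkinCount r u l d 0 j (n + 1) = ∑ p ∈ antidiagonal n, motzkinCount r u l d 0 0 p.1 *
      ∑ q ∈ Icc 1 r, u q * motzkinCount r u l d (q - 1) (j - 1) p.2 := by
  simp only [motzkinCount_eq_count]
  rw [Nat.cast_zero, count_zero_succ_of_pos _ _ (by omega)]
  refine sum_congr rfl fun p _ => congrArg _ ?_
  refine (sum_upStep_weight r u l d fun x => count _ _ (x - 1) _ p.2).trans ?_
  refine sum_congr rfl fun q hq => ?_
  rw [Nat.cast_sub hj, Nat.cast_sub (mem_Icc.1 hq).1, Nat.cast_one]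

theorem motzkin_rank_gf_zero_row_general (r : ℕ) (u : ℕ → ℕ) (l : ℕ) (d : ℕ → ℕ)
    (j : ℕ) (hj1 : 1 ≤ j) :
    motzkinGF r u l d 0 j =
      X * motzkinGF r u l d 0 0 *
        ∑ p ∈ Finset.Icc 1 r, C (u p : ℚ) * motzkinGF r u l d (p - 1) (j - 1) := by
  ext (_ | n)
  · simp [motzkinGF, motzkinCount_eq_count, count_length_zero_of_ne _ _ (show (0 : ℤ) ≠ j by omega)]
  · rw [mul_assoc, coeff_succ_X_mul, coeff_mul, motzkinGF, coeff_mk,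
      motzkinCount_zero_succ r u l d hj1]
    simp only [motzkinGF, map_sum, coeff_C_mul, coeff_mk, mul_sum, Nat.cast_sum, Nat.cast_mul]

/-- for `1 ≤ j ≤ r−1`, `A_{0,j} = x·A_{0,0}·Σ_{p=1}^{r} u_p A_{p−1,j−1}`. -/
theorem motzkin_rank_gf_zero_row (r : ℕ) (hr : 1 ≤ r) (u : ℕ → ℕ) (l : ℕ) (d : ℕ → ℕ)
    (j : ℕ) (hj1 : 1 ≤ j) (hj2 : j ≤ r - 1) :
    motzkinGF r u l d 0 j =
      X * motzkinGF r u l d 0 0 *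
        ∑ p ∈ Finset.Icc 1 r, C (u p : ℚ) * motzkinGF r u l d (p - 1) (j - 1) :=
  motzkin_rank_gf_zero_row_general r u l d j hj1
end

section
/- For rank r = 2 with natural number weights u_1, u_2, l, d_1, d_2, the generating functions A_{i,j}(x) ∈ ℚ⟦x⟧ satisfy the system: A_{0,0} = 1 + lxA_{0,0} + x²A_{0,0}(u_1d_1A_{0,0} + u_1d_2A_{0,1} + u_2d_1A_{1,0} + u_2d_2A_{1,1}); A_{0,1} = xA_{0,0}(u_1A_{0,0} + u_2A_{1,0}); A_{1,0} = xA_{0,0}(d_1A_{0,0} + d_2A_{0,1}); and A_{1,1} = A_{0,0} + xA_{0,1}(d_1A_{0,0} + d_2A_{0,1}). -/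
/-!
Work with walks on `ℤ` with an arbitrary finite set of weighted steps and let `A s t` be the
generating function of those from `s` to `t` that stay at height `≥ 0` (zero when `s < 0`).
Splitting off the first step gives `A s t = [s = t] + x Σₐ wₐ A (s + Δ a) t` for `s ≥ 0`.
Because of the factor `x`, a family `E s` that vanishes or satisfies the homogeneous version of this
recursion at every `s` is zero, so an identity between two families of generating functions
follows once it holds for `s < 0` and the difference satisfies the homogeneous recursion.

The walks from `s` to `t` that never visit `0` are the translates of those from `s - 1` to
`t - 1`. The others split at their first visit to `0` (which every walk dropping below `1` makes),
or at their last one. These decompositions, checked by the uniqueness argument above, together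
with the first-step recursion at `(0, 0)`, give the four equations when the steps are `-2, …, 2`.
-/

open PowerSeries Finset

namespace NonnegWalk

variable {ι : Type*} (Δ : ι → ℤ)

def IsNonnegPath {n : ℕ} (s t : ℤ) (f : Fin n → ι) : Prop :=
  (∀ k : Fin (n + 1), 0 ≤ s + ∑ i : Fin n, if (i : ℕ) < k then Δ (f i) else 0) ∧
    s + ∑ i, Δ (f i) = t

instance {n : ℕ} (s t : ℤ) (f : Fin n → ι) : Decidable (IsNonnegPath Δ s t f) :=
  inferInstanceAs (Decidable (_ ∧ _))

theorem isNonnegPath_cons_iff {n : ℕ} (s t : ℤ) (a : ι) (g : Fin n → ι) :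
    IsNonnegPath Δ s t (Fin.cons a g : Fin (n + 1) → ι) ↔
      0 ≤ s ∧ IsNonnegPath Δ (s + Δ a) t g := by
  have hpartial (k : Fin (n + 1)) : (∑ i : Fin (n + 1),
      if (i : ℕ) < k.succ then Δ ((Fin.cons a g : Fin (n + 1) → ι) i) else 0)
      = Δ a + ∑ i : Fin n, if (i : ℕ) < k then Δ (g i) else 0 := by
    simp only [Fin.sum_univ_succ, Fin.cons_zero, Fin.cons_succ, Fin.val_succ, Fin.val_zero,
      Nat.succ_lt_succ_iff, Nat.zero_lt_succ, if_true]
  have htotal : ∑ i : Fin (n + 1), Δ ((Fin.cons a g : Fin (n + 1) → ι) i)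
      = Δ a + ∑ i, Δ (g i) := by
    simp [Fin.sum_univ_succ]
  unfold IsNonnegPath
  rw [Fin.forall_fin_succ, htotal]
  simp only [hpartial, Fin.val_zero, Nat.not_lt_zero, if_false, Finset.sum_const_zero, add_zero,
    ← add_assoc, and_assoc]

variable [Fintype ι] {R : Type*}

section CommSemiring

variable [CommSemiring R] (w : ι → R)

def count : ℤ → ℤ → ℕ → R
  | s, t, 0 => if 0 ≤ s ∧ s = t then 1 else 0
  | s, t, n + 1 => if 0 ≤ s then ∑ a, w a * count (s + Δ a) t n else 0

theorem sum_prod_isNonnegPath_eq_count (n : ℕ) (s t : ℤ) :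
    (∑ f : Fin n → ι, if IsNonnegPath Δ s t f then ∏ i, w (f i) else 0) =
      count Δ w s t n := by
  induction n generalizing s with
  | zero => simp [IsNonnegPath, count]
  | succ n ih =>
    rw [← (Fin.consEquiv fun _ => ι).sum_comp, Fintype.sum_prod_type, count]
    change ∑ a, ∑ g : Fin n → ι, (if IsNonnegPath Δ s t (Fin.cons a g : Fin (n + 1) → ι)
      then ∏ i, w ((Fin.cons a g : Fin (n + 1) → ι) i) else 0) = _
    simp only [isNonnegPath_cons_iff, Fin.prod_univ_succ, Fin.cons_zero, Fin.cons_succ]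
    split_ifs with hs
    · simp only [hs, true_and, ← ih, Finset.mul_sum, mul_ite, mul_zero]
    · simp [hs]

theorem count_eq_zero_of_neg_right {t : ℤ} (ht : t < 0) (s : ℤ) (n : ℕ) :
    count Δ w s t n = 0 := by
  induction n generalizing s with
  | zero => simp only [count, ite_eq_right_iff]; omega
  | succ n ih => simp [count, ih]

noncomputable def gf (s t : ℤ) : R⟦X⟧ :=
  PowerSeries.mk (count Δ w s t)

theorem gf_eq_zero_of_neg_left {s : ℤ} (hs : s < 0) (t : ℤ) : gf Δ w s t = 0 := by
  ext (_ | n) <;> simp [gf, count, hs.not_ge]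

theorem gf_eq_zero_of_neg_right {t : ℤ} (ht : t < 0) (s : ℤ) : gf Δ w s t = 0 := by
  ext n
  simp [gf, count_eq_zero_of_neg_right Δ w ht]

noncomputable def transfer : (ℤ → R⟦X⟧) →ₗ[R⟦X⟧] ℤ → R⟦X⟧ where
  toFun G s := X * ∑ a, C (w a) * G (s + Δ a)
  map_add' G H := by
    ext1 s
    simp only [Pi.add_apply, mul_add, Finset.sum_add_distrib]
  map_smul' c G := by
    ext1 s
    simp only [Pi.smul_apply, smul_eq_mul, RingHom.id_apply, Finset.mul_sum]
    exact Finset.sum_congr rfl fun a _ => by ring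

theorem transfer_apply (G : ℤ → R⟦X⟧) (s : ℤ) :
    transfer Δ w G s = X * ∑ a, C (w a) * G (s + Δ a) :=
  rfl

theorem transfer_comp_sub_one (G : ℤ → R⟦X⟧) (s : ℤ) :
    transfer Δ w (G ∘ (· - 1)) s = transfer Δ w G (s - 1) := by
  simp only [transfer_apply, Function.comp_apply, sub_add_eq_add_sub]

theorem eq_zero_of_forall_eq_zero_or_eq_transfer (E : ℤ → R⟦X⟧)
    (h : ∀ s, E s = 0 ∨ E s = transfer Δ w E s) : E = 0 := by
  suffices ∀ n s, coeff n (E s) = 0 by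
    ext s n
    simp [this]
  intro n
  induction n with
  | zero => intro s; rcases h s with h | h <;> simp [h, transfer_apply]
  | succ n ih =>
    intro s
    rcases h s with h | h <;> simp [h, transfer_apply, coeff_succ_X_mul, ih]

theorem gf_eq_first_step {s : ℤ} (hs : 0 ≤ s) (t : ℤ) :
    gf Δ w s t = (if s = t then 1 else 0) + transfer Δ w (gf Δ w · t) s := by
  rcases eq_or_ne s t with rfl | hst <;> ext (_ | n) <;>
    simp [*, gf, count, transfer_apply, coeff_succ_X_mul, coeff_C_mul]

/-- Walks from `s` that stay at height `≥ 1` until they end with their first visit to `0`: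
a translate of a walk from `s - 1` to `-Δ a - 1`, followed by the step `a`. -/
noncomputable def hittingGF (s : ℤ) : R⟦X⟧ :=
  (if s = 0 then 1 else 0) + X * ∑ a, C (w a) * gf Δ w (s - 1) (-Δ a - 1)

theorem transfer_hittingGF {s : ℤ} (hs : 0 < s) :
    transfer Δ w (hittingGF Δ w) s = hittingGF Δ w s := by
  have hgf (b : ι) : gf Δ w (s - 1) (-Δ b - 1) = (if s + Δ b = 0 then 1 else 0)
      + X * ∑ a, C (w a) * gf Δ w (s + Δ a - 1) (-Δ b - 1) := by
    rw [gf_eq_first_step Δ w (by omega : 0 ≤ s - 1), transfer_apply]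
    simp only [sub_left_inj, sub_add_eq_add_sub, ← eq_neg_iff_add_eq_zero]
  simp only [hittingGF, transfer_apply, if_neg hs.ne', zero_add, hgf, mul_add,
    Finset.sum_add_distrib, Finset.mul_sum]
  congr 1
  rw [Finset.sum_comm]
  exact Finset.sum_congr rfl fun a _ => Finset.sum_congr rfl fun b _ => by ring

end CommSemiring

section CommRing

variable [CommRing R] (w : ι → R)

theorem gf_eq_last_passage (s : ℤ) {t : ℤ} (ht : 0 < t) :
    gf Δ w s t = gf Δ w (s - 1) (t - 1)
      + X * gf Δ w s 0 * ∑ a, C (w a) * gf Δ w (Δ a - 1) (t - 1) := by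
  set K := ∑ a, C (w a) * gf Δ w (Δ a - 1) (t - 1)
  have hE := eq_zero_of_forall_eq_zero_or_eq_transfer Δ w
    ((gf Δ w · t) - (gf Δ w · (t - 1)) ∘ (· - 1) - (X * K) • (gf Δ w · 0)) ?_
  · have hEs := congrFun hE s
    simp only [Pi.sub_apply, Pi.smul_apply, smul_eq_mul, Function.comp_apply,
      Pi.zero_apply] at hEs
    linear_combination hEs
  intro u
  simp only [map_sub, map_smul, Pi.sub_apply, Pi.smul_apply, smul_eq_mul, Function.comp_apply,
    transfer_comp_sub_one]
  rcases lt_trichotomy u 0 with hu | rfl | hu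
  · left
    simp [gf_eq_zero_of_neg_left Δ w hu, gf_eq_zero_of_neg_left Δ w (by omega : u - 1 < 0)]
  · right
    have h0t := gf_eq_first_step Δ w le_rfl t
    have h00 := gf_eq_first_step Δ w le_rfl 0
    have hK : transfer Δ w (gf Δ w · (t - 1)) (0 - 1) = X * K := by
      simp only [transfer_apply, K, zero_sub, neg_add_eq_sub]
    rw [if_neg ht.ne] at h0t
    rw [if_pos rfl] at h00
    rw [gf_eq_zero_of_neg_left Δ w (by norm_num : (0 : ℤ) - 1 < 0)]
    linear_combination h0t - X * K * h00 + hK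
  · right
    have hut := gf_eq_first_step Δ w hu.le t
    have hu0 := gf_eq_first_step Δ w hu.le 0
    have hut' := gf_eq_first_step Δ w (by omega : 0 ≤ u - 1) (t - 1)
    rw [if_neg hu.ne'] at hu0
    simp only [sub_left_inj] at hut'
    linear_combination hut - hut' - X * K * hu0

theorem gf_eq_first_passage (s t : ℤ) :
    gf Δ w s t = gf Δ w (s - 1) (t - 1) + hittingGF Δ w s * gf Δ w 0 t := by
  have hE := eq_zero_of_forall_eq_zero_or_eq_transfer Δ w
    ((gf Δ w · t) - (gf Δ w · (t - 1)) ∘ (· - 1) - gf Δ w 0 t • hittingGF Δ w) ?_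
  · have hEs := congrFun hE s
    simp only [Pi.sub_apply, Pi.smul_apply, smul_eq_mul, Function.comp_apply,
      Pi.zero_apply] at hEs
    linear_combination hEs
  intro u
  simp only [map_sub, map_smul, Pi.sub_apply, Pi.smul_apply, smul_eq_mul, Function.comp_apply,
    transfer_comp_sub_one]
  rcases lt_trichotomy u 0 with hu | rfl | hu
  · left
    simp [hittingGF, hu.ne, gf_eq_zero_of_neg_left Δ w hu,
      gf_eq_zero_of_neg_left Δ w (by omega : u - 1 < 0)]
  · left
    simp [hittingGF, gf_eq_zero_of_neg_left Δ w (by norm_num : (-1 : ℤ) < 0)]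
  · right
    have hut := gf_eq_first_step Δ w hu.le t
    have hut' := gf_eq_first_step Δ w (by omega : 0 ≤ u - 1) (t - 1)
    simp only [sub_left_inj] at hut'
    linear_combination hut - hut' + gf Δ w 0 t * transfer_hittingGF Δ w hu

end CommRing

end NonnegWalk

open NonnegWalk

theorem motzkinGF_eq_gf (r : ℕ) (u : ℕ → ℕ) (l : ℕ) (d : ℕ → ℕ) (s t : ℕ) :
    motzkinGF r u l d s t = gf (fun a : Fin (2 * r + 1) => (a : ℤ) - r)
      (fun a => (stepWeight u l d ((a : ℤ) - r) : ℚ)) s t := by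
  ext n
  rw [motzkinGF, gf, coeff_mk, coeff_mk, ← sum_prod_isNonnegPath_eq_count, motzkinCount]
  push_cast
  rfl

/-- the rank-2 system of equations for the generating functions `A_{i,j}`. -/
theorem motzkin_rank_two_system (u₁ u₂ l d₁ d₂ : ℕ)
    (A : ℕ → ℕ → PowerSeries ℚ)
    (hA : ∀ s t, A s t = motzkinGF 2 (fun p => if p = 1 then u₁ else if p = 2 then u₂ else 0) l
      (fun q => if q = 1 then d₁ else if q = 2 then d₂ else 0) s t) :
    A 0 0 = 1 + C (l : ℚ) * X * A 0 0
        + X ^ 2 * A 0 0 *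
            (C ((u₁ : ℚ) * (d₁ : ℚ)) * A 0 0 + C ((u₁ : ℚ) * (d₂ : ℚ)) * A 0 1
              + C ((u₂ : ℚ) * (d₁ : ℚ)) * A 1 0 + C ((u₂ : ℚ) * (d₂ : ℚ)) * A 1 1) ∧
      A 0 1 = X * A 0 0 * (C (u₁ : ℚ) * A 0 0 + C (u₂ : ℚ) * A 1 0) ∧
      A 1 0 = X * A 0 0 * (C (d₁ : ℚ) * A 0 0 + C (d₂ : ℚ) * A 0 1) ∧
      A 1 1 = A 0 0 + X * A 0 1 * (C (d₁ : ℚ) * A 0 0 + C (d₂ : ℚ) * A 0 1) := by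
  set Δ : Fin 5 → ℤ := fun a => (a : ℤ) - 2
  set w : Fin 5 → ℚ := fun a =>
    (stepWeight (fun p => if p = 1 then u₁ else if p = 2 then u₂ else 0) l
      (fun q => if q = 1 then d₁ else if q = 2 then d₂ else 0) (Δ a) : ℚ)
  have hgf (s t : ℕ) : A s t = gf Δ w s t := by rw [hA, motzkinGF_eq_gf]; rfl
  have hΔ : Δ 0 = -2 ∧ Δ 1 = -1 ∧ Δ 2 = 0 ∧ Δ 3 = 1 ∧ Δ 4 = 2 := by decide
  have hw : w 0 = d₂ ∧ w 1 = d₁ ∧ w 2 = l ∧ w 3 = u₁ ∧ w 4 = u₂ := by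
    simp [w, hΔ, stepWeight]
  have h00 := gf_eq_first_step Δ w le_rfl 0
  have h01 := gf_eq_last_passage Δ w 0 one_pos
  have h10 := gf_eq_first_passage Δ w 1 0
  have h11 := gf_eq_first_passage Δ w 1 1
  have h20 := gf_eq_first_passage Δ w 2 0
  simp only [transfer_apply, hittingGF, Fin.sum_univ_five, hΔ, hw] at h00 h01 h10 h11 h20
  norm_num [gf_eq_zero_of_neg_left, gf_eq_zero_of_neg_right] at h00 h01 h10 h11 h20
  simp only [hgf, map_mul, map_natCast]
  refine ⟨?_, ?_, ?_, ?_⟩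
  · linear_combination h00 + X * (u₁ : ℚ⟦X⟧) * h10 + X * (u₂ : ℚ⟦X⟧) * h20
  · linear_combination h01
  · linear_combination h10
  · linear_combination h11
end
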